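/- If W is a finite word of length N satisfying P_W(n) + P_W(N-n) = 2 for all 0 ≤ n ≤ N, then W is a rich palindrome. -/

import Mathlib

open List

variable {α : Type*} [DecidableEq α]

/-- The set of factors (contiguous subwords) of `W`. -/
def factorFinset (W : List α) : Finset (List α) := (W.inits.flatMap List.tails).toFinset

/-- A palindrome is a word equal to its reversal. -/
def Pal (u : List α) : Prop := u.reverse = u

instance : DecidablePred (Pal : List α → Prop) :=
  fun u => inferInstanceAs (Decidable (u.reverse = u))

/-- The set of palindromic factors of `W` (including the empty word). -/
def palFactorFinset (W : List α) : Finset (List α) := (factorFinset W).filter Pal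

/-- Subword complexity: the number of distinct factors of `W` of length `n`. -/
def C (W : List α) (n : ℕ) : ℕ := ((factorFinset W).filter (fun u => u.length = n)).card

/-- Palindromic complexity: number of distinct palindromic factors of `W` of length `n`. -/
def P (W : List α) (n : ℕ) : ℕ := ((palFactorFinset W).filter (fun u => u.length = n)).card

/-- A word is rich if it has exactly `|W| + 1` distinct palindromic factors. -/
def Rich (W : List α) : Prop := (palFactorFinset W).card = W.length + 1

/-- Number of occurrences of `u` as a factor of `W`. -/
def occ (u W : List α) : ℕ := ((List.range (W.length + 1)).filter (fun i => u <+: W.drop i)).length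

/-- `Z` is a complete return to `u` in `W`: a factor of `W` with exactly two
occurrences of `u`, one as a prefix and one as a suffix. -/
def CompleteReturn (u Z W : List α) : Prop := Z <:+: W ∧ u <+: Z ∧ u <:+ Z ∧ occ u Z = 2

/-- `u` is a right special factor of `W`. -/
def RightSpecial (u W : List α) : Prop :=
  ∃ x y : α, x ≠ y ∧ (u ++ [x]) <:+: W ∧ (u ++ [y]) <:+: W

/-- `R_W`: the smallest `p` such that `W` has no right special factor of length `p`. -/
noncomputable def RW (W : List α) : ℕ := sInf {p : ℕ | ∀ u : List α, u.length = p → ¬ RightSpecial u W}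

/-- `K_W`: the length of the shortest suffix of `W` occurring exactly once in `W`. -/
noncomputable def KW (W : List α) : ℕ := sInf {k : ℕ | ∃ u : List α, u <:+ W ∧ u.length = k ∧ occ u W = 1}

/-- A word is trapezoidal if `|W| = R_W + K_W`. -/
def Trapezoidal (W : List α) : Prop := W.length = RW W + KW W

/-- The minimal period of `W`. -/
noncomputable def minPeriod (W : List α) : ℕ :=
  sInf {q : ℕ | 0 < q ∧ ∀ i : ℕ, i + q < W.length → W[i]? = W[i + q]?}

/-- A binary word is balanced if the number of occurrences of a letter in two
factors of equal length differ by at most 1. -/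
def BalancedWord (W : List Bool) : Prop :=
  ∀ u v : List Bool, u <:+: W → v <:+: W → u.length = v.length →
    u.count true ≤ v.count true + 1

/-!
Summing the hypothesis over `n = 0, …, N` counts every palindromic factor twice (the map
`n ↦ N - n` permutes `0, …, N`), so `2 · #palFactors = 2 (N + 1)`, which is richness.
At `n = 0` it gives `P_W(N) = 1`, and the only factor of length `N` is `W` itself.
-/

theorem mem_factorFinset {u W : List α} : u ∈ factorFinset W ↔ u <:+: W := by
  simp only [factorFinset, List.mem_toFinset, List.mem_flatMap, List.mem_inits, List.mem_tails]
  constructor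
  · rintro ⟨t, ht, hu⟩
    exact hu.isInfix.trans ht.isInfix
  · rintro ⟨a, b, rfl⟩
    exact ⟨a ++ u, ⟨b, by simp⟩, ⟨a, rfl⟩⟩

theorem mem_palFactorFinset {u W : List α} : u ∈ palFactorFinset W ↔ u <:+: W ∧ Pal u := by
  rw [palFactorFinset, Finset.mem_filter, mem_factorFinset]

theorem P_zero (W : List α) : P W 0 = 1 := by
  rw [P, Finset.card_eq_one]
  refine ⟨[], Finset.eq_singleton_iff_unique_mem.mpr ⟨?_, ?_⟩⟩
  · simp [mem_palFactorFinset, Pal]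
  · simp

theorem pal_of_P_length_pos {W : List α} (hW : 0 < P W W.length) : Pal W := by
  obtain ⟨u, hu⟩ := Finset.card_pos.mp hW
  rw [Finset.mem_filter, mem_palFactorFinset] at hu
  obtain ⟨⟨hinf, hpal⟩, hlen⟩ := hu
  rwa [← hinf.sublist.eq_of_length hlen]

theorem sum_range_P (W : List α) :
    ∑ n ∈ Finset.range (W.length + 1), P W n = (palFactorFinset W).card := by
  refine (Finset.card_eq_sum_card_fiberwise fun u hu => ?_).symm
  rw [Finset.mem_coe, mem_palFactorFinset] at hu
  exact Finset.mem_range_succ_iff.mpr hu.1.length_le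

theorem sum_range_P_add_P_sub (W : List α) :
    ∑ n ∈ Finset.range (W.length + 1), (P W n + P W (W.length - n)) =
      2 * (palFactorFinset W).card := by
  have hreflect := Finset.sum_range_reflect (fun n => P W n) (W.length + 1)
  rw [Nat.add_sub_cancel] at hreflect
  rw [Finset.sum_add_distrib, hreflect, sum_range_P, two_mul]

theorem stmt9 {α : Type*} [DecidableEq α] (W : List α)
    (h : ∀ n : ℕ, n ≤ W.length → P W n + P W (W.length - n) = 2) :
    Rich W ∧ Pal W := by
  have hN : P W W.length = 1 := by
    have h0 := h 0 W.length.zero_le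
    rw [P_zero, Nat.sub_zero] at h0
    omega
  refine ⟨?_, pal_of_P_length_pos (by omega)⟩
  have hsum := sum_range_P_add_P_sub W
  rw [Finset.sum_congr rfl fun n hn => h n (Finset.mem_range_succ_iff.mp hn)] at hsum
  simp only [Finset.sum_const, Finset.card_range, smul_eq_mul] at hsum
  rw [Rich]
  omega
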